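/- arXiv:1410.5063 — 3 statements merged into one kernel-verified Lean document; each statement's English description precedes it below -/
import Mathlib

section
/- Let n ≥ 1, m ≥ 2, and let A₁, …, A_m be real symmetric n×n matrices. Then Σ_{α≠β} ‖A_αA_β − A_βA_α‖² + Σ_{α,β} (tr(A_αA_β))² ≤ (3/2)·(Σ_α ‖A_α‖²)², where the sums run over α, β ∈ {1, …, m} and ‖·‖ denotes the Frobenius norm. -/
/-!
Rotating the family by an orthogonal matrix that diagonalizes its Gram matrix `(⟪A α, A β⟫)`
changes neither side of the inequality and makes the `A α` pairwise orthogonal. For an orthogonal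
family, write one member as `diag λ` in a suitable orthonormal basis, so that
`‖[A α, A β]‖² = ∑ (λ i - λ j)² (A β)ᵢⱼ²`. Bessel's inequality bounds each off-diagonal weight
`∑_β (A β)ᵢⱼ²` by half the largest `‖A β‖²`, and the excesses `((λ i - λ j)² - ‖λ‖²)⁺` add up to
at most `2 ‖λ‖²`; hence
`∑_{β ≠ α} ‖[A α, A β]‖² ≤ ‖A α‖² (∑_{β ≠ α} ‖A β‖² + max_{β ≠ α} ‖A β‖²)`.
With `T = ∑ ‖A α‖²` and `a` the largest `‖A α‖²`, summing over `α` bounds the left-hand side by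
`T² + 2a(T - a) ≤ 3T²/2`.
-/

open Finset Matrix Unitary

section Frame

variable {τ κ : Type*} [Fintype κ]

theorem sum_smul_dotProduct_sum_smul (s : Finset τ) (c : τ → ℝ) (u : τ → κ → ℝ) :
    (∑ p ∈ s, c p • u p) ⬝ᵥ (∑ q ∈ s, c q • u q) = ∑ p ∈ s, ∑ q ∈ s, c p * c q * (u p ⬝ᵥ u q) := by
  rw [sum_dotProduct]
  refine sum_congr rfl fun p _ => ?_
  rw [smul_dotProduct, dotProduct_sum, smul_eq_mul, mul_sum]
  refine sum_congr rfl fun q _ => ?_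
  rw [dotProduct_smul, smul_eq_mul]
  ring

theorem sum_dotProduct_sq_le_of_forall_sum_smul_le {s : Finset τ} {u : τ → κ → ℝ} {K : ℝ}
    (hK : 0 ≤ K)
    (h : ∀ c : τ → ℝ, (∑ p ∈ s, c p • u p) ⬝ᵥ (∑ p ∈ s, c p • u p) ≤ K * ∑ p ∈ s, c p ^ 2)
    (x : κ → ℝ) : ∑ p ∈ s, (u p ⬝ᵥ x) ^ 2 ≤ K * (x ⬝ᵥ x) := by
  set S := ∑ p ∈ s, (u p ⬝ᵥ x) ^ 2
  set w := ∑ p ∈ s, (u p ⬝ᵥ x) • u p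
  have hwx : w ⬝ᵥ x = S := by
    simp only [w, S, sum_dotProduct, smul_dotProduct, smul_eq_mul, sq]
  have hS : 0 ≤ S := sum_nonneg fun p _ => sq_nonneg _
  have hx : 0 ≤ x ⬝ᵥ x := sum_nonneg fun i _ => mul_self_nonneg _
  have hcs : (w ⬝ᵥ x) ^ 2 ≤ (w ⬝ᵥ w) * (x ⬝ᵥ x) := by
    simpa only [dotProduct, sq] using sum_mul_sq_le_sq_mul_sq univ w x
  have key : S * S ≤ K * (x ⬝ᵥ x) * S :=
    calc S * S = (w ⬝ᵥ x) ^ 2 := by rw [hwx, sq]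
      _ ≤ (w ⬝ᵥ w) * (x ⬝ᵥ x) := hcs
      _ ≤ K * S * (x ⬝ᵥ x) := mul_le_mul_of_nonneg_right (h _) hx
      _ = K * (x ⬝ᵥ x) * S := by ring
  rcases hS.eq_or_lt with hS0 | hSpos
  · rw [← hS0]; positivity
  · exact le_of_mul_le_mul_right key hSpos

theorem sum_dotProduct_sq_le_of_pairwise_dotProduct_eq_zero {s : Finset τ} {v : τ → κ → ℝ}
    {M : ℝ} (hM0 : 0 ≤ M) (horth : (s : Set τ).Pairwise fun t t' => v t ⬝ᵥ v t' = 0)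
    (hM : ∀ t ∈ s, v t ⬝ᵥ v t ≤ M) (y : κ → ℝ) :
    ∑ t ∈ s, (v t ⬝ᵥ y) ^ 2 ≤ M * (y ⬝ᵥ y) := by
  refine sum_dotProduct_sq_le_of_forall_sum_smul_le hM0 (fun c => ?_) y
  calc (∑ t ∈ s, c t • v t) ⬝ᵥ (∑ t ∈ s, c t • v t) = ∑ t ∈ s, c t ^ 2 * (v t ⬝ᵥ v t) := by
        rw [sum_smul_dotProduct_sum_smul]
        refine sum_congr rfl fun t ht => ?_
        rw [sum_eq_single_of_mem t ht fun t' ht' hne => by rw [horth ht ht' hne.symm, mul_zero]]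
        ring
    _ ≤ ∑ t ∈ s, c t ^ 2 * M := sum_le_sum fun t ht => by gcongr; exact hM t ht
    _ = M * ∑ t ∈ s, c t ^ 2 := by rw [← sum_mul, mul_comm]

/-- Schur's test. -/
theorem sum_sum_mul_mul_le_of_abs_le {s : Finset τ} {G ρ : τ → τ → ℝ} {K : ℝ}
    (hG : ∀ p q, |G p q| ≤ ρ p q) (hρ : ∀ p q, ρ p q = ρ q p)
    (hrow : ∀ p ∈ s, ∑ q ∈ s, ρ p q ≤ K) (c : τ → ℝ) :
    ∑ p ∈ s, ∑ q ∈ s, c p * c q * G p q ≤ K * ∑ p ∈ s, c p ^ 2 := by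
  have hpt : ∀ p q, c p * c q * G p q ≤ (c p ^ 2 * ρ p q + c q ^ 2 * ρ q p) / 2 := by
    intro p q
    have h1 : c p * c q * G p q ≤ |c p * c q| * ρ p q :=
      (le_abs_self _).trans (by rw [abs_mul]; gcongr; exact hG p q)
    have h2 : |c p * c q| ≤ (c p ^ 2 + c q ^ 2) / 2 := by
      rw [abs_mul]; nlinarith [sq_nonneg (|c p| - |c q|), sq_abs (c p), sq_abs (c q)]
    have h3 : 0 ≤ ρ p q := (abs_nonneg _).trans (hG p q)
    rw [← hρ p q]
    nlinarith
  calc ∑ p ∈ s, ∑ q ∈ s, c p * c q * G p q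
      ≤ ∑ p ∈ s, ∑ q ∈ s, (c p ^ 2 * ρ p q + c q ^ 2 * ρ q p) / 2 :=
        sum_le_sum fun p _ => sum_le_sum fun q _ => hpt p q
    _ = ∑ p ∈ s, c p ^ 2 * ∑ q ∈ s, ρ p q := by
        simp only [add_div, sum_add_distrib, mul_sum]
        rw [sum_comm (f := fun p q => c q ^ 2 * ρ q p / 2)]
        rw [← sum_add_distrib]
        refine sum_congr rfl fun p _ => ?_
        rw [← sum_add_distrib]
        exact sum_congr rfl fun q _ => by ring
    _ ≤ ∑ p ∈ s, c p ^ 2 * K := sum_le_sum fun p hp => by gcongr; exact hrow p hp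
    _ = K * ∑ p ∈ s, c p ^ 2 := by rw [← sum_mul, mul_comm]

end Frame

section Spread

variable {ι : Type*} [Fintype ι] [DecidableEq ι]

theorem single_sub_single_dotProduct (i j : ι) (x : ι → ℝ) :
    (Pi.single i 1 - Pi.single j 1 : ι → ℝ) ⬝ᵥ x = x i - x j := by
  simp [sub_dotProduct, single_dotProduct]

theorem abs_single_sub_single_dotProduct_le (p q : ι × ι) :
    |(Pi.single p.1 1 - Pi.single p.2 1 : ι → ℝ) ⬝ᵥ (Pi.single q.1 1 - Pi.single q.2 1)|
      ≤ 1 + (if p = q then 1 else 0) + (if p.swap = q then 1 else 0) := by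
  obtain ⟨a, b⟩ := p
  obtain ⟨c, d⟩ := q
  simp only [single_sub_single_dotProduct, Pi.sub_apply, Pi.single_apply, Prod.mk.injEq,
    Prod.swap_prod_mk]
  rw [abs_le]
  grind

theorem sum_sub_sq_le_card_add_two_mul (x : ι → ℝ) (E : Finset (ι × ι)) :
    ∑ p ∈ E, (x p.1 - x p.2) ^ 2 ≤ (#E + 2) * ∑ i, x i ^ 2 := by
  -- `x p.1 - x p.2 = ⟪u p, x⟫`, and the Gram matrix of the `u p` is dominated by `ρ`, whose rows
  -- over `E` sum to at most `#E + 2`.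
  set u : ι × ι → ι → ℝ := fun p => Pi.single p.1 1 - Pi.single p.2 1
  set ρ : ι × ι → ι × ι → ℝ :=
    fun p q => 1 + (if p = q then 1 else 0) + (if p.swap = q then 1 else 0)
  have hρ : ∀ p q, ρ p q = ρ q p := fun p q => by
    simp only [ρ, eq_comm (a := p), Prod.swap_eq_iff_eq_swap]
  have hrow : ∀ p ∈ E, ∑ q ∈ E, ρ p q ≤ #E + 2 := fun p _ => by
    simp only [ρ, sum_add_distrib, sum_const, nsmul_eq_mul, mul_one, sum_ite_eq]
    split_ifs <;> linarith
  have hframe : ∀ c : ι × ι → ℝ,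
      (∑ p ∈ E, c p • u p) ⬝ᵥ (∑ p ∈ E, c p • u p) ≤ (#E + 2) * ∑ p ∈ E, c p ^ 2 := fun c => by
    rw [sum_smul_dotProduct_sum_smul]
    exact sum_sum_mul_mul_le_of_abs_le abs_single_sub_single_dotProduct_le hρ hrow c
  have h := sum_dotProduct_sq_le_of_forall_sum_smul_le (by positivity) hframe x
  simp only [u, single_sub_single_dotProduct] at h
  simpa only [dotProduct, sq] using h

theorem sum_sum_max_sub_sq_sub_le (x : ι → ℝ) :
    ∑ i, ∑ j, max ((x i - x j) ^ 2 - ∑ k, x k ^ 2) 0 ≤ 2 * ∑ k, x k ^ 2 := by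
  set N := ∑ k, x k ^ 2
  set E := univ.filter fun p : ι × ι => N < (x p.1 - x p.2) ^ 2
  have hmax : ∀ p : ι × ι, max ((x p.1 - x p.2) ^ 2 - N) 0
      = if N < (x p.1 - x p.2) ^ 2 then (x p.1 - x p.2) ^ 2 - N else 0 := fun p => by
    split_ifs with h
    · exact max_eq_left (by linarith)
    · exact max_eq_right (by linarith)
  rw [← Fintype.sum_prod_type' (f := fun i j => max ((x i - x j) ^ 2 - N) 0)]
  simp only [hmax]
  rw [← sum_filter, sum_sub_distrib, sum_const, nsmul_eq_mul]
  linarith [sum_sub_sq_le_card_add_two_mul x E]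

end Spread

namespace Matrix

theorem of_apply_linearCombination {τ R M : Type*} [Fintype τ] [CommSemiring R]
    [AddCommMonoid M] [Module R M] (f : M →ₗ[R] M →ₗ[R] R) (a : τ → M) (U : Matrix τ τ R) :
    of (fun γ δ => f (Fintype.linearCombination R a (U γ)) (Fintype.linearCombination R a (U δ)))
      = U * of (fun α β => f (a α) (a β)) * Uᵀ := by
  ext γ δ
  simp only [Fintype.linearCombination_apply, of_apply, map_sum, map_smul, LinearMap.sum_apply,
    LinearMap.smul_apply, smul_eq_mul, mul_apply, transpose_apply, sum_mul, mul_sum]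
  exact sum_congr rfl fun β _ => sum_congr rfl fun α _ => by ring

theorem conjStarAlgAut_of_apply {τ M : Type*} [Fintype τ] [DecidableEq τ] [AddCommMonoid M]
    [Module ℝ M] (f : M →ₗ[ℝ] M →ₗ[ℝ] ℝ) (a : τ → M) (u : unitary (Matrix τ τ ℝ)) :
    conjStarAlgAut ℝ _ u (of fun α β => f (a α) (a β))
      = of fun γ δ => f (Fintype.linearCombination ℝ a ((u : Matrix τ τ ℝ) γ))
          (Fintype.linearCombination ℝ a ((u : Matrix τ τ ℝ) δ)) := by
  rw [of_apply_linearCombination, conjStarAlgAut_apply, star_eq_conjTranspose,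
    conjTranspose_eq_transpose_of_trivial]

section Frobenius

variable {ι : Type*} [Fintype ι]

def frobeniusInner : Matrix ι ι ℝ →ₗ[ℝ] Matrix ι ι ℝ →ₗ[ℝ] ℝ :=
  LinearMap.mk₂ ℝ (fun X Y => vec X ⬝ᵥ vec Y) (fun _ _ _ => by simp [add_dotProduct])
    (fun _ _ _ => by simp) (fun _ _ _ => by simp [dotProduct_add]) (fun _ _ _ => by simp)

def frobeniusNormSq (X : Matrix ι ι ℝ) : ℝ := ∑ i, ∑ j, X i j ^ 2

@[simp]
theorem frobeniusInner_apply (X Y : Matrix ι ι ℝ) : frobeniusInner X Y = vec X ⬝ᵥ vec Y := rfl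

theorem frobeniusInner_self (X : Matrix ι ι ℝ) : frobeniusInner X X = frobeniusNormSq X := by
  simp only [frobeniusInner_apply, dotProduct, vec, frobeniusNormSq, Fintype.sum_prod_type, sq]
  exact sum_comm

theorem frobeniusNormSq_nonneg (X : Matrix ι ι ℝ) : 0 ≤ frobeniusNormSq X :=
  sum_nonneg fun _ _ => sum_nonneg fun _ _ => sq_nonneg _

theorem IsSymm.trace_mul {X : Matrix ι ι ℝ} (hX : X.IsSymm) (Y : Matrix ι ι ℝ) :
    (X * Y).trace = frobeniusInner X Y := by
  rw [frobeniusInner_apply, vec_dotProduct_vec, hX.eq]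

theorem sum_sum_frobeniusNormSq_comm {τ : Type*} [Fintype τ] (F : τ → τ → Matrix ι ι ℝ) :
    ∑ γ, ∑ δ, frobeniusNormSq (F γ δ) = ∑ i, ∑ j, frobeniusNormSq (of fun γ δ => F γ δ i j) := by
  simp only [frobeniusNormSq, of_apply]
  calc _ = ∑ γ, ∑ i, ∑ j, ∑ δ, F γ δ i j ^ 2 :=
        sum_congr rfl fun γ _ => sum_comm.trans (sum_congr rfl fun i _ => sum_comm)
    _ = _ := sum_comm.trans (sum_congr rfl fun i _ => sum_comm)

variable [DecidableEq ι]

theorem trace_conjStarAlgAut (u : unitary (Matrix ι ι ℝ)) (X : Matrix ι ι ℝ) :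
    (conjStarAlgAut ℝ _ u X).trace = X.trace := by
  rw [conjStarAlgAut_apply, trace_mul_comm, ← Matrix.mul_assoc, coe_star_mul_self, Matrix.one_mul]

theorem frobeniusInner_conjStarAlgAut (u : unitary (Matrix ι ι ℝ)) (X Y : Matrix ι ι ℝ) :
    frobeniusInner (conjStarAlgAut ℝ _ u X) (conjStarAlgAut ℝ _ u Y) = frobeniusInner X Y := by
  simp only [frobeniusInner_apply, vec_dotProduct_vec, ← conjTranspose_eq_transpose_of_trivial,
    ← star_eq_conjTranspose, ← map_star, ← map_mul, trace_conjStarAlgAut]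

theorem frobeniusNormSq_conjStarAlgAut (u : unitary (Matrix ι ι ℝ)) (X : Matrix ι ι ℝ) :
    frobeniusNormSq (conjStarAlgAut ℝ _ u X) = frobeniusNormSq X := by
  rw [← frobeniusInner_self, frobeniusInner_conjStarAlgAut, frobeniusInner_self]

theorem isSymm_conjStarAlgAut {X : Matrix ι ι ℝ} (hX : X.IsSymm) (u : unitary (Matrix ι ι ℝ)) :
    (conjStarAlgAut ℝ _ u X).IsSymm := by
  rw [← isHermitian_iff_isSymm] at hX ⊢
  exact IsSelfAdjoint.map (f := conjStarAlgAut ℝ (Matrix ι ι ℝ) u) hX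

theorem IsSymm.exists_conjStarAlgAut_eq_diagonal {A : Matrix ι ι ℝ} (hA : A.IsSymm) :
    ∃ (u : unitary (Matrix ι ι ℝ)) (d : ι → ℝ), conjStarAlgAut ℝ _ u A = diagonal d := by
  have hA' : A.IsHermitian := isHermitian_iff_isSymm.mpr hA
  exact ⟨_, _, hA'.conjStarAlgAut_star_eigenvectorUnitary⟩

theorem frobeniusNormSq_diagonal (d : ι → ℝ) : frobeniusNormSq (diagonal d) = ∑ i, d i ^ 2 := by
  refine sum_congr rfl fun i _ => ?_
  rw [sum_eq_single i (fun j _ hji => by simp [hji.symm]) (by simp)]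
  simp

theorem diagonal_mul_sub_mul_diagonal_apply (d : ι → ℝ) (X : Matrix ι ι ℝ) (i j : ι) :
    (diagonal d * X - X * diagonal d) i j = (d i - d j) * X i j := by
  simp only [sub_apply, diagonal_mul, mul_diagonal]
  ring

variable {τ : Type*}

theorem sum_sq_apply_le_of_pairwise_frobeniusInner_eq_zero {s : Finset τ}
    {X : τ → Matrix ι ι ℝ} {M : ℝ} (hM0 : 0 ≤ M) (hX : ∀ t ∈ s, (X t).IsSymm)
    (horth : (s : Set τ).Pairwise fun t t' => frobeniusInner (X t) (X t') = 0)
    (hM : ∀ t ∈ s, frobeniusNormSq (X t) ≤ M) {i j : ι} (hij : i ≠ j) :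
    ∑ t ∈ s, X t i j ^ 2 ≤ M / 2 := by
  set y : ι × ι → ℝ := Pi.single (j, i) 1 + Pi.single (i, j) 1
  have hy : y ⬝ᵥ y = 2 := by
    simp [y, dotProduct_add, hij, hij.symm]
    norm_num
  have hXy : ∀ t ∈ s, vec (X t) ⬝ᵥ y = 2 * X t i j := fun t ht => by
    simp [y, dotProduct_add, (hX t ht).apply i j]
    ring
  have h := sum_dotProduct_sq_le_of_pairwise_dotProduct_eq_zero (v := fun t => vec (X t)) hM0
    horth (fun t ht => by rw [← frobeniusInner_apply, frobeniusInner_self]; exact hM t ht) y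
  rw [hy, sum_congr rfl fun t ht => by rw [hXy t ht]] at h
  simp only [mul_pow, ← mul_sum] at h
  linarith

theorem sum_frobeniusNormSq_commutator_diagonal_le (d : ι → ℝ) {s : Finset τ}
    {X : τ → Matrix ι ι ℝ} {M : ℝ} (hM0 : 0 ≤ M) (hX : ∀ t ∈ s, (X t).IsSymm)
    (horth : (s : Set τ).Pairwise fun t t' => frobeniusInner (X t) (X t') = 0)
    (hM : ∀ t ∈ s, frobeniusNormSq (X t) ≤ M) :
    ∑ t ∈ s, frobeniusNormSq (diagonal d * X t - X t * diagonal d)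
      ≤ (∑ k, d k ^ 2) * (∑ t ∈ s, frobeniusNormSq (X t) + M) := by
  set N := ∑ k, d k ^ 2
  set w : ι → ι → ℝ := fun i j => ∑ t ∈ s, X t i j ^ 2
  set e : ι → ι → ℝ := fun i j => max ((d i - d j) ^ 2 - N) 0
  have hN : 0 ≤ N := sum_nonneg fun k _ => sq_nonneg _
  have hlhs : ∑ t ∈ s, frobeniusNormSq (diagonal d * X t - X t * diagonal d)
      = ∑ i, ∑ j, (d i - d j) ^ 2 * w i j := by
    simp only [frobeniusNormSq, diagonal_mul_sub_mul_diagonal_apply, mul_pow, w, mul_sum]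
    rw [sum_comm]
    exact sum_congr rfl fun i _ => sum_comm
  have hmass : ∑ t ∈ s, frobeniusNormSq (X t) = ∑ i, ∑ j, w i j := by
    simp only [frobeniusNormSq, w]
    rw [sum_comm]
    exact sum_congr rfl fun i _ => sum_comm
  have hpt : ∀ i j, (d i - d j) ^ 2 * w i j ≤ N * w i j + M / 2 * e i j := by
    intro i j
    have hw : 0 ≤ w i j := sum_nonneg fun t _ => sq_nonneg _
    have he : 0 ≤ e i j := le_max_right _ _
    rcases eq_or_ne i j with rfl | hij
    · rw [sub_self, zero_pow two_ne_zero, zero_mul]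
      positivity
    · have hg : (d i - d j) ^ 2 ≤ N + e i j := by linarith [le_max_left ((d i - d j) ^ 2 - N) 0]
      have hwM := sum_sq_apply_le_of_pairwise_frobeniusInner_eq_zero hM0 hX horth hM hij
      nlinarith
  calc ∑ t ∈ s, frobeniusNormSq (diagonal d * X t - X t * diagonal d)
      = ∑ i, ∑ j, (d i - d j) ^ 2 * w i j := hlhs
    _ ≤ ∑ i, ∑ j, (N * w i j + M / 2 * e i j) := by gcongr with i _ j _; exact hpt i j
    _ = N * ∑ t ∈ s, frobeniusNormSq (X t) + M / 2 * ∑ i, ∑ j, e i j := by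
        simp only [sum_add_distrib, ← mul_sum, ← hmass]
    _ ≤ N * ∑ t ∈ s, frobeniusNormSq (X t) + M / 2 * (2 * N) := by
        gcongr
        exact sum_sum_max_sub_sq_sub_le d
    _ = N * (∑ t ∈ s, frobeniusNormSq (X t) + M) := by ring

theorem sum_frobeniusNormSq_commutator_le {A : Matrix ι ι ℝ} (hA : A.IsSymm) {s : Finset τ}
    {B : τ → Matrix ι ι ℝ} {M : ℝ} (hM0 : 0 ≤ M) (hB : ∀ t ∈ s, (B t).IsSymm)
    (horth : (s : Set τ).Pairwise fun t t' => frobeniusInner (B t) (B t') = 0)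
    (hM : ∀ t ∈ s, frobeniusNormSq (B t) ≤ M) :
    ∑ t ∈ s, frobeniusNormSq (A * B t - B t * A)
      ≤ frobeniusNormSq A * (∑ t ∈ s, frobeniusNormSq (B t) + M) := by
  obtain ⟨u, d, hd⟩ := hA.exists_conjStarAlgAut_eq_diagonal
  have h := sum_frobeniusNormSq_commutator_diagonal_le d
    (X := fun t => conjStarAlgAut ℝ _ u (B t)) hM0
    (fun t ht => isSymm_conjStarAlgAut (hB t ht) u)
    (fun t ht t' ht' h => by simpa only [frobeniusInner_conjStarAlgAut] using horth ht ht' h)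
    (fun t ht => by simpa only [frobeniusNormSq_conjStarAlgAut] using hM t ht)
  rw [← frobeniusNormSq_diagonal, ← hd] at h
  simpa only [← map_mul, ← map_sub, frobeniusNormSq_conjStarAlgAut] using h

variable [Fintype τ] [DecidableEq τ]

theorem sum_sum_frobeniusNormSq_commutator_add_sum_sq_le {A : τ → Matrix ι ι ℝ}
    (hA : ∀ α, (A α).IsSymm) (horth : Pairwise fun α β => frobeniusInner (A α) (A β) = 0) :
    ∑ α, ∑ β, frobeniusNormSq (A α * A β - A β * A α) + ∑ α, frobeniusNormSq (A α) ^ 2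
      ≤ 3 / 2 * (∑ α, frobeniusNormSq (A α)) ^ 2 := by
  rcases isEmpty_or_nonempty τ with hτ | hτ
  · simp
  set N := fun α => frobeniusNormSq (A α)
  set T := ∑ α, N α
  obtain ⟨α₀, hα₀⟩ := Finite.exists_max N
  set a := N α₀
  have hN : ∀ α, 0 ≤ N α := fun α => frobeniusNormSq_nonneg _
  have hrest : ∀ α, ∑ β ∈ univ.erase α, N β = T - N α := fun α => sum_erase_eq_sub (mem_univ α)
  -- Each `A β` with `β ≠ α` has norm at most `M α`: the other members of the family together
  -- weigh `T - a` when `α = α₀`, and no member outweighs `A α₀`.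
  set M : τ → ℝ := fun α => if α = α₀ then T - a else a
  have hM : ∀ α, ∀ β ∈ univ.erase α, N β ≤ M α := by
    intro α β hβ
    simp only [M]
    split_ifs with h
    · subst h
      rw [← hrest]
      exact single_le_sum (fun γ _ => hN γ) hβ
    · exact hα₀ β
  have hM0 : ∀ α, 0 ≤ M α := fun α => by
    simp only [M]
    split_ifs
    · rw [← hrest]; exact sum_nonneg fun γ _ => hN γ
    · exact hN α₀
  have hper : ∀ α, ∑ β, frobeniusNormSq (A α * A β - A β * A α) ≤ N α * (T - N α + M α) := by
    intro α
    rw [← sum_erase univ (a := α) (f := fun β => frobeniusNormSq (A α * A β - A β * A α))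
      (by simp [frobeniusNormSq]), ← hrest]
    exact sum_frobeniusNormSq_commutator_le (hA α) (hM0 α) (fun β _ => hA β)
      (horth.set_pairwise _) (hM α)
  have hNM : ∑ α, N α * M α = 2 * a * (T - a) := by
    rw [← add_sum_erase univ _ (mem_univ α₀)]
    have hothers : ∑ α ∈ univ.erase α₀, N α * M α = (T - a) * a := by
      rw [← hrest α₀, sum_mul]
      exact sum_congr rfl fun α hα => by simp [M, ne_of_mem_erase hα]
    simp only [M, if_pos, hothers]
    show a * (T - a) + (T - a) * a = 2 * a * (T - a)
    ring
  calc ∑ α, ∑ β, frobeniusNormSq (A α * A β - A β * A α) + ∑ α, N α ^ 2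
      ≤ ∑ α, N α * (T - N α + M α) + ∑ α, N α ^ 2 := by gcongr with α; exact hper α
    _ = T ^ 2 + ∑ α, N α * M α := by
        simp only [mul_add, mul_sub, sum_add_distrib, sum_sub_distrib, ← sum_mul, sq]
        ring
    _ ≤ 3 / 2 * T ^ 2 := by
        rw [hNM]
        nlinarith [sq_nonneg (T - 2 * a)]

theorem sum_sum_frobeniusNormSq_commutator_linearCombination (A : τ → Matrix ι ι ℝ)
    (u : unitary (Matrix τ τ ℝ)) :
    let B := fun γ => Fintype.linearCombination ℝ A ((u : Matrix τ τ ℝ) γ)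
    ∑ γ, ∑ δ, frobeniusNormSq (B γ * B δ - B δ * B γ)
      = ∑ α, ∑ β, frobeniusNormSq (A α * A β - A β * A α) := by
  intro B
  -- For fixed `(i, j)`, the rotation conjugates the matrix `((A α * A β - A β * A α) i j)_{α β}`
  -- by `u`, since the entry is bilinear in `(A α, A β)`.
  let bracketEntry (i j : ι) : Matrix ι ι ℝ →ₗ[ℝ] Matrix ι ι ℝ →ₗ[ℝ] ℝ :=
    LinearMap.mk₂ ℝ (fun X Y => (X * Y - Y * X) i j)
      (fun _ _ _ => by simp only [add_mul, mul_add, add_apply, sub_apply]; ring)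
      (fun _ _ _ => by simp only [smul_mul_assoc, mul_smul_comm, ← smul_sub, smul_apply])
      (fun _ _ _ => by simp only [add_mul, mul_add, add_apply, sub_apply]; ring)
      (fun _ _ _ => by simp only [smul_mul_assoc, mul_smul_comm, ← smul_sub, smul_apply])
  rw [sum_sum_frobeniusNormSq_comm,
    sum_sum_frobeniusNormSq_comm fun α β => A α * A β - A β * A α]
  refine sum_congr rfl fun i _ => sum_congr rfl fun j _ => ?_
  rw [← frobeniusNormSq_conjStarAlgAut u (of fun α β => (A α * A β - A β * A α) i j)]
  exact congrArg frobeniusNormSq (conjStarAlgAut_of_apply (bracketEntry i j) A u).symm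

theorem sum_sum_frobeniusNormSq_commutator_add_sum_sum_frobeniusInner_sq_le
    {A : τ → Matrix ι ι ℝ} (hA : ∀ α, (A α).IsSymm) :
    ∑ α, ∑ β, frobeniusNormSq (A α * A β - A β * A α) + ∑ α, ∑ β, frobeniusInner (A α) (A β) ^ 2
      ≤ 3 / 2 * (∑ α, frobeniusNormSq (A α)) ^ 2 := by
  set G : Matrix τ τ ℝ := of fun α β => frobeniusInner (A α) (A β)
  have hG : G.IsSymm := IsSymm.ext fun α β => by simp [G, dotProduct_comm]
  obtain ⟨u, μ, hμ⟩ := hG.exists_conjStarAlgAut_eq_diagonal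
  set B := fun γ => Fintype.linearCombination ℝ A ((u : Matrix τ τ ℝ) γ)
  have hGB : (of fun γ δ => frobeniusInner (B γ) (B δ)) = diagonal μ :=
    (conjStarAlgAut_of_apply frobeniusInner A u).symm.trans hμ
  have hBorth : Pairwise fun γ δ => frobeniusInner (B γ) (B δ) = 0 := fun γ δ h => by
    simpa [h] using congr_fun₂ hGB γ δ
  have hμB : ∀ γ, μ γ = frobeniusNormSq (B γ) := fun γ => by
    rw [← frobeniusInner_self]
    simpa using (congr_fun₂ hGB γ γ).symm
  have hB : ∀ γ, (B γ).IsSymm := fun γ => by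
    have hAt : ∀ α, (A α)ᵀ = A α := fun α => (hA α).eq
    simp only [IsSymm, B, Fintype.linearCombination_apply, transpose_sum, transpose_smul, hAt]
  have hnorm : ∑ γ, frobeniusNormSq (B γ) = ∑ α, frobeniusNormSq (A α) := by
    have h := congrArg trace hμ
    simp only [trace_conjStarAlgAut, trace_diagonal, hμB] at h
    simpa only [trace, G, diag_apply, of_apply, frobeniusInner_self] using h.symm
  have hgram : ∑ γ, frobeniusNormSq (B γ) ^ 2 = ∑ α, ∑ β, frobeniusInner (A α) (A β) ^ 2 := by
    calc ∑ γ, frobeniusNormSq (B γ) ^ 2 = frobeniusNormSq (diagonal μ) := by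
          simp [frobeniusNormSq_diagonal, hμB]
      _ = frobeniusNormSq G := by rw [← hμ, frobeniusNormSq_conjStarAlgAut]
  have h := sum_sum_frobeniusNormSq_commutator_add_sum_sq_le hB hBorth
  rwa [sum_sum_frobeniusNormSq_commutator_linearCombination, hgram, hnorm] at h

end Frobenius

end Matrix

theorem commutator_trace_frobenius_ineq_general (n m : ℕ)
    (A : Fin m → Matrix (Fin n) (Fin n) ℝ)
    (hsymm : ∀ α, (A α).IsSymm) :
    (∑ α : Fin m, ∑ β ∈ Finset.univ.erase α,
        ∑ i : Fin n, ∑ j : Fin n, ((A α * A β - A β * A α) i j) ^ 2)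
      + ∑ α : Fin m, ∑ β : Fin m, (Matrix.trace (A α * A β)) ^ 2
      ≤ (3 / 2) * (∑ α : Fin m, ∑ i : Fin n, ∑ j : Fin n, (A α i j) ^ 2) ^ 2 := by
  have htrace : ∀ α β, (A α * A β).trace = frobeniusInner (A α) (A β) :=
    fun α β => (hsymm α).trace_mul _
  have herase : ∀ α, ∑ β ∈ univ.erase α, ∑ i, ∑ j, ((A α * A β - A β * A α) i j) ^ 2
      = ∑ β, ∑ i, ∑ j, ((A α * A β - A β * A α) i j) ^ 2 :=
    fun α => sum_erase univ (by simp)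
  simpa only [frobeniusNormSq, htrace, herase] using
    sum_sum_frobeniusNormSq_commutator_add_sum_sum_frobeniusInner_sq_le hsymm

/-- For real symmetric `n × n` matrices `A₁, …, A_m` (with `m ≥ 2`), one has
`∑_{α ≠ β} ‖[A_α, A_β]‖² + ∑_{α,β} (tr (A_α A_β))² ≤ (3/2) (∑_α ‖A_α‖²)²`,
where `‖·‖` is the Frobenius norm. -/
theorem commutator_trace_frobenius_ineq (n m : ℕ) (hn : 1 ≤ n) (hm : 2 ≤ m)
    (A : Fin m → Matrix (Fin n) (Fin n) ℝ)
    (hsymm : ∀ α, (A α).IsSymm) :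
    (∑ α : Fin m, ∑ β ∈ Finset.univ.erase α,
        ∑ i : Fin n, ∑ j : Fin n, ((A α * A β - A β * A α) i j) ^ 2)
      + ∑ α : Fin m, ∑ β : Fin m, (Matrix.trace (A α * A β)) ^ 2
      ≤ (3 / 2) * (∑ α : Fin m, ∑ i : Fin n, ∑ j : Fin n, (A α i j) ^ 2) ^ 2 :=
  commutator_trace_frobenius_ineq_general n m A hsymm
end

section
/- Let Ω ⊆ ℝⁿ be open and let u : Ω → ℝ be a C² solution of the graphic translator equation on Ω. Set v(x) = √(1 + |∇u(x)|²) and define the C¹ vector field Y : Ω × ℝ → ℝ^{n+1} by Y(x, t) = e^{t}·(−∇u(x)/v(x), 1/v(x)), i.e. Yⁱ(x,t) = −e^{t} ∂_i u(x)/v(x) for 1 ≤ i ≤ n and Y^{n+1}(x,t) = e^{t}/v(x). Then Y is divergence-free on Ω × ℝ: Σ_{k=1}^{n+1} ∂_k Y^k = 0. -/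
theorem fderiv_const_mul_field {𝕜 E : Type*} [NontriviallyNormedField 𝕜] [NormedAddCommGroup E]
    [NormedSpace 𝕜 E] (c : 𝕜) (f : E → 𝕜) (x : E) :
    fderiv 𝕜 (fun y => c * f y) x = c • fderiv 𝕜 f x :=
  congrFun (fderiv_const_smul_field (f := f) c) x

theorem graphic_translator_calibration_div_free_general
    (n : ℕ) (Ω : Set (Fin n → ℝ))
    (u : (Fin n → ℝ) → ℝ)
    (v : (Fin n → ℝ) → ℝ)
    (heq : ∀ x ∈ Ω,
      ∑ i, fderiv ℝ (fun y => fderiv ℝ u y (Pi.single i 1) / v y) x (Pi.single i 1)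
        = 1 / v x) :
    ∀ x ∈ Ω, ∀ t : ℝ,
      (∑ i, fderiv ℝ (fun y => Real.exp t * (-(fderiv ℝ u y (Pi.single i 1)) / v y)) x
          (Pi.single i 1))
        + deriv (fun s : ℝ => Real.exp s / v x) t = 0 := by
  intro x hx t
  have hspace : ∀ i, fderiv ℝ (fun y => Real.exp t * (-(fderiv ℝ u y (Pi.single i 1)) / v y)) x
      (Pi.single i 1)
      = -Real.exp t * fderiv ℝ (fun y => fderiv ℝ u y (Pi.single i 1) / v y) x (Pi.single i 1) := by
    intro i
    simp_rw [neg_div, mul_neg, ← neg_mul]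
    rw [fderiv_const_mul_field]
    rfl
  have htime : deriv (fun s : ℝ => Real.exp s / v x) t = Real.exp t / v x := by
    rw [deriv_div_const, Real.deriv_exp]
  rw [Finset.sum_congr rfl fun i _ => hspace i, ← Finset.mul_sum, heq x hx, htime]
  ring

/-- If `u` is a `C²` solution of the graphic translator equation
`∑ᵢ ∂ᵢ(∂ᵢu / √(1+|∇u|²)) = 1/√(1+|∇u|²)` on an open set `Ω ⊆ ℝⁿ`, then the vector field
`Y(x,t) = eᵗ · (−∇u(x)/v(x), 1/v(x))` on `Ω × ℝ` (with `v = √(1+|∇u|²)`) is divergence-free: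
the sum of the `x`-derivatives `∂ᵢYⁱ` (for `1 ≤ i ≤ n`) and the `t`-derivative of the last
component `Y^{n+1}` vanishes. -/
theorem graphic_translator_calibration_div_free
    (n : ℕ) (Ω : Set (Fin n → ℝ)) (hΩ : IsOpen Ω)
    (u : (Fin n → ℝ) → ℝ) (hu : ContDiffOn ℝ 2 u Ω)
    (v : (Fin n → ℝ) → ℝ)
    (hv : ∀ x, v x = Real.sqrt (1 + ∑ i, (fderiv ℝ u x (Pi.single i 1)) ^ 2))
    (heq : ∀ x ∈ Ω,
      ∑ i, fderiv ℝ (fun y => fderiv ℝ u y (Pi.single i 1) / v y) x (Pi.single i 1)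
        = 1 / v x) :
    ∀ x ∈ Ω, ∀ t : ℝ,
      (∑ i, fderiv ℝ (fun y => Real.exp t * (-(fderiv ℝ u y (Pi.single i 1)) / v y)) x
          (Pi.single i 1))
        + deriv (fun s : ℝ => Real.exp s / v x) t = 0 :=
  graphic_translator_calibration_div_free_general n Ω u v heq
end

section
/- Let V ∈ ℝⁿ and let f : ℝⁿ → ℝ be a C² function such that f(x)/|x| → 0 as |x| → ∞. Then there exists a sequence (x_k) in ℝⁿ such that f(x_k) → sup_{ℝⁿ} f (as an extended real number), |∇f(x_k)| → 0, and limsup_{k→∞} (Δf(x_k) + ⟨V, ∇f(x_k)⟩) ≤ 0. -/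
/-! For `ε > 0` the penalized function `f - ε ⟨·⟩`, where `⟨x⟩ = √(1 + ‖x‖²)`, tends to `-∞` by
sublinear growth, so it attains its maximum at some `x_ε`. As `⟨·⟩` has gradient of norm `≤ 1`
and Hessian `≤ 1`, the graph of `f` lies below a paraboloid `f x_ε + ℓ v + ε ‖v‖² / 2` touching
it at `x_ε`, with `‖ℓ‖ ≤ ε`. On each line through `x_ε` this forces `∇f(x_ε) = ℓ` and second
directional derivatives `≤ ε`, hence `Δf(x_ε) ≤ n ε` and `⟪V, ∇f(x_ε)⟫ ≤ ‖V‖ ε`. Finally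
`f x_ε ≥ f y - ε ⟨y⟩` for every `y`, so `f x_ε → sup f` as `ε → 0`. -/

open Filter Set Topology
open scoped RealInnerProductSpace

theorem IsLocalMax.hasDerivAt_deriv_nonpos {g g' : ℝ → ℝ} {a c : ℝ} (hmax : IsLocalMax g a)
    (hg : ∀ t, HasDerivAt g (g' t) t) (hg' : HasDerivAt g' c a) : c ≤ 0 := by
  by_contra! hc
  have hg'a : g' a = 0 := hmax.hasDerivAt_eq_zero (hg a)
  have hpos : ∀ᶠ t in 𝓝[>] a, 0 < g' t := by
    have hslope := (hasDerivAt_iff_tendsto_slope.mp hg').mono_left (nhdsGT_le_nhdsNE a)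
    filter_upwards [hslope.eventually (eventually_gt_nhds hc), self_mem_nhdsWithin]
      with t ht (hta : a < t)
    rw [slope_def_field, hg'a, sub_zero] at ht
    exact (div_pos_iff_of_pos_right (sub_pos.2 hta)).1 ht
  obtain ⟨δ, hδ, hIoo⟩ := mem_nhdsGT_iff_exists_Ioo_subset.mp hpos
  have hmono : StrictMonoOn g (Icc a δ) := by
    refine strictMonoOn_of_deriv_pos (convex_Icc a δ)
      (fun t _ => (hg t).continuousAt.continuousWithinAt) fun t ht => ?_
    rw [interior_Icc] at ht
    rw [(hg t).deriv]
    exact hIoo ht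
  obtain ⟨t, hle, hat⟩ :=
    ((hmax.filter_mono nhdsWithin_le_nhds).and (Ioo_mem_nhdsGT (show a < δ from hδ))).exists
  exact (hmono (left_mem_Icc.2 hδ.le) (Ioo_subset_Icc_self hat) hat.1).not_ge hle

section RealQuadraticUpperBound

variable {g : ℝ → ℝ} {α β : ℝ}

theorem isLocalMax_sub_quadratic (hle : ∀ t, g t ≤ g 0 + α * t + β / 2 * t ^ 2) :
    IsLocalMax (fun t => g t - α * t - β / 2 * t ^ 2) 0 :=
  .of_forall fun t => by simp only; linarith [hle t]

theorem HasDerivAt.eq_of_forall_le_quadratic {d : ℝ} (hg : HasDerivAt g d 0)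
    (hle : ∀ t, g t ≤ g 0 + α * t + β / 2 * t ^ 2) : d = α := by
  have hderiv : HasDerivAt (fun t => g t - α * t - β / 2 * t ^ 2) (d - α) 0 := by
    simpa using (hg.fun_sub ((hasDerivAt_id' 0).const_mul α)).fun_sub
      ((hasDerivAt_pow 2 0).const_mul (β / 2))
  linarith [(isLocalMax_sub_quadratic hle).hasDerivAt_eq_zero hderiv]

theorem hasDerivAt_deriv_le_of_forall_le_quadratic {g' : ℝ → ℝ} {c : ℝ}
    (hg : ∀ t, HasDerivAt g (g' t) t) (hg' : HasDerivAt g' c 0)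
    (hle : ∀ t, g t ≤ g 0 + α * t + β / 2 * t ^ 2) : c ≤ β := by
  have hderiv : ∀ t, HasDerivAt (fun t => g t - α * t - β / 2 * t ^ 2) (g' t - α - β * t) t :=
    fun t =>
      ((hg t).fun_sub ((hasDerivAt_id' t).const_mul α)).fun_sub
        ((hasDerivAt_pow 2 t).const_mul (β / 2)) |>.congr_deriv (by norm_num; ring)
  have hderiv2 : HasDerivAt (fun t => g' t - α - β * t) (c - β) 0 := by
    simpa using (hg'.sub_const α).fun_sub ((hasDerivAt_id' 0).const_mul β)
  linarith [(isLocalMax_sub_quadratic hle).hasDerivAt_deriv_nonpos hderiv hderiv2]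

end RealQuadraticUpperBound

section QuadraticUpperBound

variable {E : Type*} [NormedAddCommGroup E] [NormedSpace ℝ E] {f : E → ℝ} {x₀ : E}
  {ℓ : StrongDual ℝ E} {β : ℝ}

theorem hasDerivAt_add_smul (x v : E) (t : ℝ) : HasDerivAt (fun t : ℝ => x + t • v) v t := by
  simpa using ((hasDerivAt_id' t).smul_const v).const_add x

/-- Written with `x₀ + 0 • v` so that it reads `g t ≤ g 0 + …` for `g t = f (x₀ + t • v)`. -/
theorem le_quadratic_along_line
    (hle : ∀ v, f (x₀ + v) ≤ f x₀ + ℓ v + β / 2 * ‖v‖ ^ 2) (v : E) (t : ℝ) :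
    f (x₀ + t • v) ≤ f (x₀ + (0 : ℝ) • v) + ℓ v * t + β * ‖v‖ ^ 2 / 2 * t ^ 2 := by
  have h := hle (t • v)
  rw [map_smul, smul_eq_mul, norm_smul, Real.norm_eq_abs, mul_pow, sq_abs] at h
  rw [zero_smul, add_zero]
  linarith

theorem HasFDerivAt.eq_of_forall_le_quadratic {f' : StrongDual ℝ E} (hf : HasFDerivAt f f' x₀)
    (hle : ∀ v, f (x₀ + v) ≤ f x₀ + ℓ v + β / 2 * ‖v‖ ^ 2) : f' = ℓ := by
  ext v
  exact (hf.comp_hasDerivAt_of_eq 0 (hasDerivAt_add_smul x₀ v 0) (by simp))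
    |>.eq_of_forall_le_quadratic (le_quadratic_along_line hle v)

theorem fderiv_fderiv_apply_le_of_forall_le_quadratic (hf : Differentiable ℝ f)
    (hf' : DifferentiableAt ℝ (fderiv ℝ f) x₀)
    (hle : ∀ v, f (x₀ + v) ≤ f x₀ + ℓ v + β / 2 * ‖v‖ ^ 2) (v : E) :
    fderiv ℝ (fun y => fderiv ℝ f y v) x₀ v ≤ β * ‖v‖ ^ 2 := by
  have hdir : HasFDerivAt (fun y => fderiv ℝ f y v) (fderiv ℝ (fun y => fderiv ℝ f y v) x₀) x₀ :=
    (hf'.clm_apply (differentiableAt_const v)).hasFDerivAt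
  exact hasDerivAt_deriv_le_of_forall_le_quadratic
    (fun t => (hf _).hasFDerivAt.comp_hasDerivAt t (hasDerivAt_add_smul x₀ v t))
    (hdir.comp_hasDerivAt_of_eq 0 (hasDerivAt_add_smul x₀ v 0) (by simp))
    (le_quadratic_along_line hle v)

end QuadraticUpperBound

section JapaneseBracket

variable {E : Type*} [NormedAddCommGroup E]

noncomputable def japaneseBracket (x : E) : ℝ := √(1 + ‖x‖ ^ 2)

theorem sq_japaneseBracket (x : E) : japaneseBracket x ^ 2 = 1 + ‖x‖ ^ 2 :=
  Real.sq_sqrt (by positivity)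

theorem one_le_japaneseBracket (x : E) : 1 ≤ japaneseBracket x :=
  Real.one_le_sqrt.2 (by nlinarith [norm_nonneg x])

theorem norm_le_japaneseBracket (x : E) : ‖x‖ ≤ japaneseBracket x :=
  Real.le_sqrt_of_sq_le (by linarith)

theorem continuous_japaneseBracket : Continuous (japaneseBracket : E → ℝ) := by
  unfold japaneseBracket; fun_prop

theorem japaneseBracket_add_le [InnerProductSpace ℝ E] (x v : E) :
    japaneseBracket (x + v) ≤ japaneseBracket x + ⟪x, v⟫ / japaneseBracket x + ‖v‖ ^ 2 / 2 := by
  set s := japaneseBracket x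
  have hs : 1 ≤ s := one_le_japaneseBracket x
  have hs2 : s ^ 2 = 1 + ‖x‖ ^ 2 := sq_japaneseBracket x
  have hw : 0 < s ^ 2 + (⟪x, v⟫ + ‖v‖ ^ 2 / 2) := by
    nlinarith [neg_abs_le ⟪x, v⟫, abs_real_inner_le_norm x v, sq_nonneg (‖x‖ - ‖v‖ / 2)]
  calc japaneseBracket (x + v) ≤ s + (⟪x, v⟫ + ‖v‖ ^ 2 / 2) / s := by
        refine Real.sqrt_le_iff.2 ⟨?_, ?_⟩
        · rw [show s + (⟪x, v⟫ + ‖v‖ ^ 2 / 2) / s = (s ^ 2 + (⟪x, v⟫ + ‖v‖ ^ 2 / 2)) / s by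
            field_simp]
          positivity
        · rw [add_sq, mul_assoc, mul_div_cancel₀ _ (by positivity), hs2, norm_add_sq_real]
          nlinarith [sq_nonneg ((⟪x, v⟫ + ‖v‖ ^ 2 / 2) / s)]
    _ ≤ s + ⟪x, v⟫ / s + ‖v‖ ^ 2 / 2 := by
        rw [add_div, ← add_assoc]
        linarith [div_le_self (by positivity : 0 ≤ ‖v‖ ^ 2 / 2) hs]

end JapaneseBracket

section PenalizedMaximum

variable {E : Type*} [NormedAddCommGroup E] {f : E → ℝ} {ε : ℝ}

theorem exists_forall_sub_mul_japaneseBracket_le [ProperSpace E] (hf : Continuous f)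
    (hgrowth : Tendsto (fun x => f x / ‖x‖) (cocompact E) (𝓝 0)) (hε : 0 < ε) :
    ∃ x₀, ∀ y, f y - ε * japaneseBracket y ≤ f x₀ - ε * japaneseBracket x₀ := by
  refine Continuous.exists_forall_ge (f := fun y => f y - ε * japaneseBracket y)
    (hf.sub (continuous_const.mul continuous_japaneseBracket)) ?_
  have hlin : Tendsto (fun x => ‖x‖ * (f x / ‖x‖ - ε)) (cocompact E) atBot :=
    tendsto_norm_cocompact_atTop.atTop_mul_neg (neg_neg_of_pos hε)
      (by simpa using hgrowth.sub_const ε)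
  refine tendsto_atBot_mono' _ ?_ hlin
  filter_upwards [tendsto_norm_cocompact_atTop.eventually_ne_atTop 0] with x hx
  rw [mul_sub, mul_div_cancel₀ _ hx]
  nlinarith [norm_le_japaneseBracket x]

variable [InnerProductSpace ℝ E] {x₀ : E}

theorem norm_div_japaneseBracket_smul_innerSL_le (hε : 0 ≤ ε) (x : E) :
    ‖(ε / japaneseBracket x) • innerSL ℝ x‖ ≤ ε := by
  have hpos : 0 < japaneseBracket x := zero_lt_one.trans_le (one_le_japaneseBracket x)
  rw [norm_smul, innerSL_apply_norm, Real.norm_of_nonneg (by positivity), div_mul_eq_mul_div,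
    div_le_iff₀ hpos]
  exact mul_le_mul_of_nonneg_left (norm_le_japaneseBracket x) hε

theorem le_quadratic_of_forall_sub_mul_japaneseBracket_le (hε : 0 ≤ ε)
    (hmax : ∀ y, f y - ε * japaneseBracket y ≤ f x₀ - ε * japaneseBracket x₀) (v : E) :
    f (x₀ + v) ≤ f x₀ + ((ε / japaneseBracket x₀) • innerSL ℝ x₀) v + ε / 2 * ‖v‖ ^ 2 := by
  have hbracket := mul_le_mul_of_nonneg_left (japaneseBracket_add_le x₀ v) hε
  rw [smul_apply, innerSL_apply_apply, smul_eq_mul, div_mul_eq_mul_div, mul_div_assoc]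
  linarith [hmax (x₀ + v)]

end PenalizedMaximum

theorem sum_fderiv_fderiv_single_le_of_forall_le_quadratic {ι : Type*} [Fintype ι]
    [DecidableEq ι] {f : EuclideanSpace ℝ ι → ℝ} {x₀ : EuclideanSpace ℝ ι}
    {ℓ : StrongDual ℝ (EuclideanSpace ℝ ι)} {β : ℝ} (hf : Differentiable ℝ f)
    (hf' : DifferentiableAt ℝ (fderiv ℝ f) x₀)
    (hle : ∀ v, f (x₀ + v) ≤ f x₀ + ℓ v + β / 2 * ‖v‖ ^ 2) :
    ∑ i, fderiv ℝ (fun y => fderiv ℝ f y (EuclideanSpace.single i 1)) x₀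
      (EuclideanSpace.single i 1) ≤ Fintype.card ι * β :=
  calc _ ≤ ∑ _i : ι, β := Finset.sum_le_sum fun i _ =>
        (fderiv_fderiv_apply_le_of_forall_le_quadratic hf hf' hle _).trans_eq (by simp)
    _ = Fintype.card ι * β := by simp

theorem limsup_coe_le_of_le_of_tendsto {α : Type*} {l : Filter α} [l.NeBot] {u v : α → ℝ}
    {a : ℝ} (huv : ∀ k, u k ≤ v k) (hv : Tendsto v l (𝓝 a)) :
    limsup (fun k => (u k : EReal)) l ≤ a :=
  (limsup_le_limsup (.of_forall fun k => EReal.coe_le_coe_iff.2 (huv k))).trans_eq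
    (EReal.tendsto_coe.2 hv).limsup_eq

theorem tendsto_coe_iSup_of_forall_eventually_lt {ι α : Type*} {l : Filter α} {f : ι → ℝ}
    {x : α → ι} (h : ∀ y, ∀ r < f y, ∀ᶠ k in l, r < f (x k)) :
    Tendsto (fun k => (f (x k) : EReal)) l (𝓝 (⨆ y, (f y : EReal))) := by
  refine tendsto_order.2 ⟨fun a ha => ?_, fun a ha =>
    .of_forall fun k => (le_iSup (fun y => (f y : EReal)) (x k)).trans_lt ha⟩
  obtain ⟨y, hy⟩ := lt_iSup_iff.1 ha
  obtain ⟨r, har, hr⟩ := EReal.exists_between_coe_real hy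
  filter_upwards [h y r (EReal.coe_lt_coe_iff.1 hr)] with k hk
  exact har.trans (EReal.coe_lt_coe_iff.2 hk)

/-- Generalized (Omori–Yau type) maximum principle for the drift Laplacian
`ℒ_{II} f = Δf + ⟨V, ∇f⟩` on ℝⁿ: for any `C²` function `f` with sublinear growth
there is a sequence `x_k` with `f(x_k) → sup f` (as extended reals),
`|∇f(x_k)| → 0`, and `limsup (Δf + ⟨V,∇f⟩)(x_k) ≤ 0`. -/
theorem drift_laplacian_maximum_principle
    (n : ℕ) (V : EuclideanSpace ℝ (Fin n))
    (f : EuclideanSpace ℝ (Fin n) → ℝ) (hf : ContDiff ℝ 2 f)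
    (hgrowth : Tendsto (fun x => f x / ‖x‖) (cocompact (EuclideanSpace ℝ (Fin n))) (nhds 0)) :
    ∃ x : ℕ → EuclideanSpace ℝ (Fin n),
      Tendsto (fun k => (f (x k) : EReal)) atTop (nhds (⨆ y, (f y : EReal)))
      ∧ Tendsto (fun k => ‖gradient f (x k)‖) atTop (nhds 0)
      ∧ limsup (fun k =>
          (((∑ i, fderiv ℝ (fun y => fderiv ℝ f y (EuclideanSpace.single i 1)) (x k)
                (EuclideanSpace.single i 1))
            + ⟪V, gradient f (x k)⟫ : ℝ) : EReal)) atTop ≤ 0 := by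
  set ε : ℕ → ℝ := fun k => 1 / (k + 1)
  have hε_pos : ∀ k, 0 < ε k := fun k => by positivity
  have hε : Tendsto ε atTop (𝓝 0) := tendsto_one_div_add_atTop_nhds_zero_nat
  have hf₁ : Differentiable ℝ f := hf.differentiable (by norm_num)
  have hf₂ : Differentiable ℝ (fderiv ℝ f) :=
    (hf.fderiv_right (m := 1) (by norm_num)).differentiable (by norm_num)
  choose x hx using fun k =>
    exists_forall_sub_mul_japaneseBracket_le hf.continuous hgrowth (hε_pos k)
  have hquad := fun k => le_quadratic_of_forall_sub_mul_japaneseBracket_le (hε_pos k).le (hx k)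
  have hlap := fun k => sum_fderiv_fderiv_single_le_of_forall_le_quadratic hf₁ (hf₂ _) (hquad k)
  have hgrad : ∀ k, ‖gradient f (x k)‖ ≤ ε k := fun k => by
    rw [gradient, LinearIsometryEquiv.norm_map,
      (hf₁ _).hasFDerivAt.eq_of_forall_le_quadratic (hquad k)]
    exact norm_div_japaneseBracket_smul_innerSL_le (hε_pos k).le _
  refine ⟨x, tendsto_coe_iSup_of_forall_eventually_lt fun y r hr => ?_,
    squeeze_zero (fun k => norm_nonneg _) hgrad hε, ?_⟩
  · have hpenalized : Tendsto (fun k => f y - ε k * japaneseBracket y) atTop (𝓝 (f y)) := by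
      simpa using tendsto_const_nhds.sub (hε.mul_const (japaneseBracket y))
    filter_upwards [hpenalized.eventually (eventually_gt_nhds hr)] with k hk
    nlinarith [hx k y, hε_pos k, one_le_japaneseBracket (x k)]
  · refine (limsup_coe_le_of_le_of_tendsto (v := fun k => (n + ‖V‖) * ε k) (fun k => ?_)
      (by simpa using hε.const_mul ((n : ℝ) + ‖V‖))).trans_eq EReal.coe_zero
    have hdrift := (real_inner_le_norm V _).trans
      (mul_le_mul_of_nonneg_left (hgrad k) (norm_nonneg V))
    simp only [Fintype.card_fin] at hlap
    linarith [hlap k]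
end
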